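/- Let d ≥ 1, let Q and K be cubes with K ⊆ Q, and let ω : ℝ^d → ℝ be measurable with 0 < δ ≤ ω(x) ≤ 1 for all x and some δ > 0, and suppose |ω(x) − ω(y)| ≤ C₀ (|x − y| / d_Q)^λ for all x, y ∈ Q, where C₀, λ > 0. If a is a measurable function with supp a ⊆ K, ‖a‖_∞ ≤ |K|^{-1}, and ∫_K a(x) ω(x) dx = 0, then |∫_K a(x) dx| ≤ δ^{-1} C₀ (d_K / d_Q)^λ. -/

import Mathlib

/-!
Write `c` for the center of `K`. The cancellation `∫_K a ω = 0` gives
`ω(c) ∫_K a = ∫_K a (ω(c) - ω)`, and on `K` the Hölder bound makes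
`|ω(c) - ω| ≤ C₀ (d_K / d_Q)^λ`. Since `∫_K |a| ≤ |K| ‖a‖_∞ ≤ 1` and `ω(c) ≥ δ`, the estimate
follows.
-/

open MeasureTheory

noncomputable section

/-- `ℝ^d` as a Euclidean space. -/
abbrev Rd (d : ℕ) := EuclideanSpace ℝ (Fin d)

/-- A cube in `ℝ^d`, given by its center and (positive) radius. -/
structure Cube (d : ℕ) where
  center : Rd d
  radius : ℝ
  radius_pos : 0 < radius

/-- The underlying open set of a cube: `Q(c,r) = {y : max_i |c_i - y_i| < r}`. -/
def Cube.carrier {d : ℕ} (Q : Cube d) : Set (Rd d) :=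
  {y | ∀ i, |Q.center i - y i| < Q.radius}

/-- The diameter `d_Q = 2 √d · r_Q` of a cube. -/
def Cube.diam {d : ℕ} (Q : Cube d) : ℝ := 2 * Real.sqrt d * Q.radius

section Oscillation

variable {α : Type*} [MeasurableSpace α] {μ : Measure α} {s : Set α}

theorem setIntegral_le_one_of_ae_le_inv_measureReal (hs : μ s ≠ ⊤) {f : α → ℝ}
    (hf : IntegrableOn f s μ) (hbound : ∀ᵐ x ∂μ.restrict s, f x ≤ (μ.real s)⁻¹) :
    ∫ x in s, f x ∂μ ≤ 1 :=
  calc ∫ x in s, f x ∂μ ≤ ∫ _ in s, (μ.real s)⁻¹ ∂μ :=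
        integral_mono_ae hf (integrableOn_const hs) hbound
    _ = μ.real s * (μ.real s)⁻¹ := by rw [setIntegral_const, smul_eq_mul]
    _ ≤ 1 := mul_inv_le_one

theorem abs_mul_setIntegral_le_of_setIntegral_mul_eq_zero {a ω : α → ℝ} (hs : MeasurableSet s)
    (ha : IntegrableOn a s μ) (haω : IntegrableOn (fun x => a x * ω x) s μ)
    (hcancel : ∫ x in s, a x * ω x ∂μ = 0) (c : α) {M : ℝ}
    (hosc : ∀ x ∈ s, |ω c - ω x| ≤ M) :
    |ω c * ∫ x in s, a x ∂μ| ≤ M * ∫ x in s, |a x| ∂μ := by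
  have hsplit : (fun x => a x * (ω c - ω x)) = fun x => a x * ω c - a x * ω x := by
    ext x; ring
  have hIg : IntegrableOn (fun x => a x * (ω c - ω x)) s μ := by
    rw [hsplit]; exact (ha.mul_const (ω c)).sub haω
  have hrepr : ω c * ∫ x in s, a x ∂μ = ∫ x in s, a x * (ω c - ω x) ∂μ := by
    rw [hsplit, integral_sub (ha.mul_const (ω c)) haω, hcancel, sub_zero, integral_mul_const,
      mul_comm]
  calc |ω c * ∫ x in s, a x ∂μ|
      = |∫ x in s, a x * (ω c - ω x) ∂μ| := by rw [hrepr]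
    _ ≤ ∫ x in s, |a x * (ω c - ω x)| ∂μ := abs_integral_le_integral_abs
    _ ≤ ∫ x in s, M * |a x| ∂μ := setIntegral_mono_on hIg.abs (ha.abs.const_mul M) hs
        fun x hx => by
          rw [abs_mul, mul_comm M]
          exact mul_le_mul_of_nonneg_left (hosc x hx) (abs_nonneg _)
    _ = M * ∫ x in s, |a x| ∂μ := integral_const_mul M _

end Oscillation

namespace Cube

variable {d : ℕ} (K : Cube d)

theorem center_mem : K.center ∈ K.carrier :=
  fun i => by simpa using K.radius_pos

theorem isOpen_carrier : IsOpen K.carrier := by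
  have : K.carrier = ⋂ i, {y : Rd d | |K.center i - y i| < K.radius} := by
    ext y; simp [Cube.carrier, Set.mem_iInter]
  rw [this]
  exact isOpen_iInter_of_finite fun i =>
    isOpen_lt (continuous_const.sub (EuclideanSpace.proj i).continuous).abs continuous_const

theorem norm_sub_center_le {y : Rd d} (hy : y ∈ K.carrier) :
    ‖y - K.center‖ ≤ Real.sqrt d * K.radius := by
  have hcoord : ∀ i, ‖(y - K.center) i‖ ^ 2 ≤ K.radius ^ 2 := fun i => by
    rw [Real.norm_eq_abs, sq_abs, PiLp.sub_apply, ← sq_abs, abs_sub_comm]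
    exact pow_le_pow_left₀ (abs_nonneg _) (hy i).le 2
  calc ‖y - K.center‖ = Real.sqrt (∑ i, ‖(y - K.center) i‖ ^ 2) := EuclideanSpace.norm_eq _
    _ ≤ Real.sqrt (∑ _i : Fin d, K.radius ^ 2) :=
        Real.sqrt_le_sqrt (Finset.sum_le_sum fun i _ => hcoord i)
    _ = Real.sqrt d * K.radius := by
        rw [Finset.sum_const, Finset.card_univ, Fintype.card_fin, nsmul_eq_mul,
          Real.sqrt_mul (Nat.cast_nonneg d), Real.sqrt_sq K.radius_pos.le]

theorem norm_sub_le_diam {x y : Rd d} (hx : x ∈ K.carrier) (hy : y ∈ K.carrier) :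
    ‖x - y‖ ≤ K.diam :=
  calc ‖x - y‖ ≤ ‖x - K.center‖ + ‖y - K.center‖ := by
        rw [← norm_sub_rev K.center y]; exact norm_sub_le_norm_sub_add_norm_sub x _ y
    _ ≤ Real.sqrt d * K.radius + Real.sqrt d * K.radius :=
        add_le_add (K.norm_sub_center_le hx) (K.norm_sub_center_le hy)
    _ = K.diam := by rw [Cube.diam]; ring

theorem diam_nonneg : 0 ≤ K.diam := by
  have := K.radius_pos
  rw [Cube.diam]; positivity

theorem volume_ne_top : volume K.carrier ≠ ⊤ :=
  ((Metric.isBounded_closedBall (x := K.center)).subset fun _ hy => by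
    rw [Metric.mem_closedBall, dist_eq_norm]
    exact K.norm_sub_center_le hy).measure_lt_top.ne

end Cube

theorem statement5_general (d : ℕ) (Q K : Cube d)
    (hKQ : K.carrier ⊆ Q.carrier)
    (ω : Rd d → ℝ) (hωmeas : Measurable ω)
    (δ : ℝ) (hδ : 0 < δ) (hω : ∀ x, δ ≤ ω x ∧ ω x ≤ 1)
    (C₀ l : ℝ) (hC₀ : 0 < C₀) (hl : 0 < l)
    (hHolder : ∀ x ∈ Q.carrier, ∀ y ∈ Q.carrier,
      |ω x - ω y| ≤ C₀ * (‖x - y‖ / Q.diam) ^ l)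
    (a : Rd d → ℝ) (hameas : Measurable a)
    (hbound : ∀ᵐ x ∂volume, |a x| ≤ ((volume K.carrier).toReal)⁻¹)
    (hcancel : ∫ x in K.carrier, a x * ω x = 0) :
    |∫ x in K.carrier, a x| ≤ δ⁻¹ * C₀ * (K.diam / Q.diam) ^ l := by
  set M := C₀ * (K.diam / Q.diam) ^ l
  have hM : 0 ≤ M :=
    mul_nonneg hC₀.le (by have := Q.diam_nonneg; have := K.diam_nonneg; positivity)
  have hbound' : ∀ᵐ x ∂volume.restrict K.carrier, |a x| ≤ (volume.real K.carrier)⁻¹ :=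
    ae_restrict_of_ae hbound
  have ha : IntegrableOn a K.carrier :=
    Measure.integrableOn_of_bounded K.volume_ne_top hameas.aestronglyMeasurable hbound'
  have haω : IntegrableOn (fun x => a x * ω x) K.carrier :=
    ha.mul_bdd hωmeas.aestronglyMeasurable (c := 1) <| .of_forall fun x => by
      rw [Real.norm_eq_abs, abs_of_pos (hδ.trans_le (hω x).1)]; exact (hω x).2
  have hosc : ∀ x ∈ K.carrier, |ω K.center - ω x| ≤ M := fun x hx =>
    (hHolder _ (hKQ K.center_mem) _ (hKQ hx)).trans <| mul_le_mul_of_nonneg_left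
      (Real.rpow_le_rpow (by have := Q.diam_nonneg; positivity)
        (div_le_div_of_nonneg_right (K.norm_sub_le_diam K.center_mem hx) Q.diam_nonneg) hl.le)
      hC₀.le
  have hmass : ∫ x in K.carrier, |a x| ≤ 1 :=
    setIntegral_le_one_of_ae_le_inv_measureReal K.volume_ne_top ha.abs hbound'
  have hkey := abs_mul_setIntegral_le_of_setIntegral_mul_eq_zero K.isOpen_carrier.measurableSet
    ha haω hcancel K.center hosc
  rw [abs_mul, abs_of_pos (hδ.trans_le (hω K.center).1)] at hkey
  calc |∫ x in K.carrier, a x| ≤ δ⁻¹ * (ω K.center * |∫ x in K.carrier, a x|) := by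
        rw [← mul_assoc]
        exact le_mul_of_one_le_left (abs_nonneg _) ((one_le_inv_mul₀ hδ).mpr (hω K.center).1)
    _ ≤ δ⁻¹ * (M * 1) :=
        mul_le_mul_of_nonneg_left (hkey.trans (mul_le_mul_of_nonneg_left hmass hM))
          (inv_nonneg.mpr hδ.le)
    _ = δ⁻¹ * C₀ * (K.diam / Q.diam) ^ l := by ring

/-- if `K ⊆ Q`, `0 < δ ≤ ω ≤ 1`, `ω` is `λ`-Hölder at scale `d_Q` on `Q`,
and `a` is supported in `K` with `‖a‖_∞ ≤ |K|⁻¹` and `∫_K a ω = 0`, then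
`|∫_K a| ≤ δ⁻¹ C₀ (d_K/d_Q)^λ`. -/
theorem statement5 (d : ℕ) (hd : 1 ≤ d) (Q K : Cube d)
    (hKQ : K.carrier ⊆ Q.carrier)
    (ω : Rd d → ℝ) (hωmeas : Measurable ω)
    (δ : ℝ) (hδ : 0 < δ) (hω : ∀ x, δ ≤ ω x ∧ ω x ≤ 1)
    (C₀ l : ℝ) (hC₀ : 0 < C₀) (hl : 0 < l)
    (hHolder : ∀ x ∈ Q.carrier, ∀ y ∈ Q.carrier,
      |ω x - ω y| ≤ C₀ * (‖x - y‖ / Q.diam) ^ l)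
    (a : Rd d → ℝ) (hameas : Measurable a)
    (hsupp : Function.support a ⊆ K.carrier)
    (hbound : ∀ᵐ x ∂volume, |a x| ≤ ((volume K.carrier).toReal)⁻¹)
    (hcancel : ∫ x in K.carrier, a x * ω x = 0) :
    |∫ x in K.carrier, a x| ≤ δ⁻¹ * C₀ * (K.diam / Q.diam) ^ l :=
  statement5_general d Q K hKQ ω hωmeas δ hδ hω C₀ l hC₀ hl hHolder a hameas hbound hcancel
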